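/- Consider a PIN model with fixed parameters (𝒜, ρ, P, φ) on a sequence of interaction graphs G_n (G_n having n nodes and at least one link) with total mixing gaps W_{G_n} → 0 as n → ∞ (asymptotically totally mixing), and for each n ≥ 2 let μ_n be a stationary distribution of the PIN model on G_n. Suppose V : ℝ^𝒜 → ℝ is twice continuously differentiable and ∇V(θ)·D̄(θ) ≤ 0 for all θ ∈ P(𝒜) (a mean-field Lyapunov function). Then for every δ > 0, lim_{n→∞} μ_n({x ∈ 𝒜^{V_n} : ∇V(θ(x))·D̄(θ(x)) > −δ}) = 1. -/

import Mathlib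

open Finset Filter

noncomputable section

/-- The empirical type (state frequencies) of a configuration. -/
def confType {V A : Type*} [Fintype V] [DecidableEq A] (x : V → A) (i : A) : ℝ :=
  ((Finset.univ.filter fun v => x v = i).card : ℝ) / (Fintype.card V : ℝ)

/-- The boundary (empirical link-pair frequencies) of a configuration. -/
def boundary {V A : Type*} [DecidableEq A] (E : Finset (V × V)) (x : V → A) (i j : A) : ℝ :=
  ((E.filter fun e => x e.1 = i ∧ x e.2 = j).card : ℝ) / (E.card : ℝ)

/-- Off-diagonal part of the PIN transition matrix. -/
def Toff {V A : Type*} [Fintype V] [DecidableEq V] [DecidableEq A]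
    (E : Finset (V × V)) (ρ : ℝ) (P : A → A → ℝ) (φ : A → A → A → ℝ) (x y : V → A) : ℝ :=
  if (Finset.univ.filter fun v => x v ≠ y v).card = 1 then
    ∑ u ∈ Finset.univ.filter fun v => x v ≠ y v,
      ((1 - ρ) * (1 / (Fintype.card V : ℝ)) * P (x u) (y u)
        + (ρ / (E.card : ℝ)) * ∑ e ∈ E.filter fun e => e.1 = u, φ (x u) (y u) (x e.2))
  else 0

/-- The PIN transition matrix. -/
def pinTrans {V A : Type*} [Fintype V] [DecidableEq V] [Fintype A] [DecidableEq A]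
    (E : Finset (V × V)) (ρ : ℝ) (P : A → A → ℝ) (φ : A → A → A → ℝ) (x y : V → A) : ℝ :=
  if x = y then 1 - ∑ z : V → A, Toff E ρ P φ x z else Toff E ρ P φ x y

/-- The mean drift of the PIN model. -/
def meanDrift {V A : Type*} [Fintype V] [DecidableEq V] [Fintype A] [DecidableEq A]
    (E : Finset (V × V)) (ρ : ℝ) (P : A → A → ℝ) (φ : A → A → A → ℝ) (x : V → A) (i : A) : ℝ :=
  (Fintype.card V : ℝ) * ∑ y : V → A, pinTrans E ρ P φ x y * (confType y i - confType x i)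

/-- The limit drift of the PIN model. -/
def limitDrift {A : Type*} [Fintype A] (ρ : ℝ) (P : A → A → ℝ) (φ : A → A → A → ℝ)
    (θ : A → ℝ) (i : A) : ℝ :=
  ((1 - ρ) * ∑ j, P j i * θ j) + (ρ * ∑ ℓ, θ ℓ * ∑ j, φ j i ℓ * θ j) - θ i

/-- The linear operator Q acting on boundaries. -/
def Qop {A : Type*} [Fintype A] (φ : A → A → A → ℝ) (ξ : A → A → ℝ) (i : A) : ℝ :=
  (∑ ℓ, ∑ j, ξ j ℓ * φ j i ℓ) - ∑ ℓ, ξ i ℓ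

/-- Membership in the probability simplex over `A`. -/
def inSimplex {A : Type*} [Fintype A] (θ : A → ℝ) : Prop :=
  (∀ i, 0 ≤ θ i) ∧ ∑ i, θ i = 1

/-- The hypotheses on the parameters of a PIN model: `ρ ∈ [0,1]`, `P` and each `φ(ℓ)`
row-stochastic and nonnegative, the interaction graph nonempty and without self-loops. -/
def IsPinModel {V A : Type*} [Fintype A] (E : Finset (V × V)) (ρ : ℝ)
    (P : A → A → ℝ) (φ : A → A → A → ℝ) : Prop :=
  0 ≤ ρ ∧ ρ ≤ 1 ∧ (∀ i j, 0 ≤ P i j) ∧ (∀ i, ∑ j, P i j = 1) ∧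
    (∀ i j ℓ, 0 ≤ φ i j ℓ) ∧ (∀ i ℓ, ∑ j, φ i j ℓ = 1) ∧
    E.Nonempty ∧ ∀ e ∈ E, e.1 ≠ e.2

/-- Stationary distribution of a PIN model. -/
def IsPinStationary {V A : Type*} [Fintype V] [DecidableEq V] [Fintype A] [DecidableEq A]
    (E : Finset (V × V)) (ρ : ℝ) (P : A → A → ℝ) (φ : A → A → A → ℝ)
    (μ : (V → A) → ℝ) : Prop :=
  (∀ x, 0 ≤ μ x) ∧ (∑ x : V → A, μ x = 1) ∧
    ∀ y : V → A, ∑ x : V → A, μ x * pinTrans E ρ P φ x y = μ y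

/-- The total mixing gap of a graph. -/
def mixingGap {V : Type*} [Fintype V] [DecidableEq V] (E : Finset (V × V)) : ℝ :=
  sSup {w : ℝ | ∃ S U : Finset V, Disjoint S U ∧
    w = |((E.filter fun e => e.1 ∈ S ∧ e.2 ∈ U).card : ℝ) / (E.card : ℝ) -
      ((S.card : ℝ) * (U.card : ℝ)) / ((Fintype.card V : ℝ) * ((Fintype.card V : ℝ) - 1))|}

open Classical in
/-- Total `μ`-mass of the set of configurations satisfying `p`. -/
def massOf {X : Type*} [Fintype X] (μ : X → ℝ) (p : X → Prop) : ℝ :=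
  ∑ x, if p x then μ x else 0

/-!
Write `θ` for the type, `ξ` for the boundary and `n` for the number of nodes. Under a stationary
law the generator `∑_y T(x,y) (f y - f x)` integrates to zero for every `f`; take
`f = W ∘ θ`. A single transition moves `θ` by at most `1/n`, so by Taylor's formula `n` times the
generator equals `∇W(θ)·D(x) + O(1/n)`, where the mean drift is
`D(x) = (1-ρ)(Pᵀθ - θ) + ρ Q(ξ)`. Up to `4 W_G + 1/(n-1)` the boundary `ξ` is the product
`θ θᵀ` (for the diagonal entries, average the mixing gap over all splittings of a colour class),
and replacing `ξ` by `θ θᵀ` turns `D` into `D̄(θ)`. Hence the `μ`-mean of `∇W(θ)·D̄(θ)`, which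
is pointwise `≤ 0`, is at least `-o(1)`, and Markov's inequality concludes.
-/

lemma eq_update_of_forall_ne_iff {V A : Type*} [DecidableEq V] {x y : V → A} {u : V}
    (h : ∀ v, x v ≠ y v ↔ v = u) : y = Function.update x u (y u) := by
  funext v
  rcases eq_or_ne v u with rfl | hv
  · simp
  · rw [Function.update_of_ne hv]
    exact (not_not.mp (mt (h v).mp hv)).symm

lemma eq_and_eq_of_update_eq_update {V A : Type*} [DecidableEq V] {x : V → A} {u u' : V}
    {a a' : A} (ha : a ≠ x u) (h : Function.update x u a = Function.update x u' a') :
    u = u' ∧ a = a' := by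
  have hu : u = u' := by
    by_contra hne
    have := congrFun h u
    rw [Function.update_self, Function.update_of_ne hne] at this
    exact ha this
  subst hu
  exact ⟨rfl, Function.update_injective x u h⟩

open scoped NNReal in
lemma norm_sub_sub_fderiv_le_of_lipschitzOnWith {E F : Type*} [NormedAddCommGroup E]
    [NormedSpace ℝ E] [NormedAddCommGroup F] [NormedSpace ℝ F] {f : E → F} {s : Set E} {K : ℝ≥0}
    (hf : ∀ z ∈ s, DifferentiableAt ℝ f z) (hs : Convex ℝ s)
    (hK : LipschitzOnWith K (fderiv ℝ f) s) {a b : E} (ha : a ∈ s) (hb : b ∈ s) :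
    ‖f b - f a - fderiv ℝ f a (b - a)‖ ≤ K * ‖b - a‖ ^ 2 := by
  have hball : ∀ z ∈ s ∩ Metric.closedBall a ‖b - a‖,
      ‖fderiv ℝ f z - fderiv ℝ f a‖ ≤ K * ‖b - a‖ :=
    fun z hz => (lipschitzOnWith_iff_norm_sub_le.mp hK hz.1 ha).trans
      (mul_le_mul_of_nonneg_left (mem_closedBall_iff_norm.mp hz.2) K.2)
  have := (hs.inter (convex_closedBall a _)).norm_image_sub_le_of_norm_fderiv_le'
    (fun z hz => hf z hz.1) hball ⟨ha, Metric.mem_closedBall_self (norm_nonneg _)⟩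
    ⟨hb, mem_closedBall_iff_norm.mpr le_rfl⟩
  rwa [mul_assoc, ← sq] at this

lemma abs_mul_div_mul_sub_one_sub_le {n s u : ℝ} (hn : 2 ≤ n) (hs : 0 ≤ s) (hsn : s ≤ n)
    (hu : 0 ≤ u) (hun : u ≤ n) : |s * u / (n * (n - 1)) - s / n * (u / n)| ≤ 1 / (n - 1) := by
  have hn1 : 0 < n - 1 := by linarith
  have hkey : s * u / (n * (n - 1)) - s / n * (u / n) = s / n * (u / n) / (n - 1) := by
    field_simp
    ring
  rw [hkey, abs_of_nonneg (by positivity)]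
  gcongr
  exact mul_le_one₀ (div_le_one_of_le₀ hsn (by linarith)) (by positivity)
    (div_le_one_of_le₀ hun (by linarith))

lemma abs_mul_sub_one_div_mul_sub_one_sub_le {n s : ℝ} (hn : 2 ≤ n) (hs : 0 ≤ s) (hsn : s ≤ n) :
    |s * (s - 1) / (n * (n - 1)) - s / n * (s / n)| ≤ 1 / (n - 1) := by
  have hn1 : 0 < n - 1 := by linarith
  have hsn' : s / n ≤ 1 := div_le_one_of_le₀ hsn (by linarith)
  have hkey : s * (s - 1) / (n * (n - 1)) - s / n * (s / n)
      = -(s / n * (1 - s / n) / (n - 1)) := by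
    field_simp
    ring
  have h1 : 0 ≤ 1 - s / n := by linarith
  rw [hkey, abs_neg, abs_of_nonneg (by positivity)]
  gcongr
  nlinarith [div_nonneg hs (by linarith : (0 : ℝ) ≤ n)]

section Powerset

variable {V : Type*} [DecidableEq V]

lemma card_powerset_filter_mem_notMem {S : Finset V} {a b : V}
    (ha : a ∈ S) (hb : b ∈ S) (hab : a ≠ b) :
    (S.powerset.filter fun T => a ∈ T ∧ b ∉ T).card = 2 ^ (S.card - 2) := by
  set R := (S.erase a).erase b
  have hS : S = insert a (insert b R) := by
    rw [Finset.insert_erase (Finset.mem_erase.mpr ⟨hab.symm, hb⟩), Finset.insert_erase ha]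
  have haR : a ∉ insert b R := by simp [R, hab]
  have hbR : b ∉ R := by simp [R]
  have hcard : S.card = R.card + 2 := by
    rw [hS, Finset.card_insert_of_notMem haR, Finset.card_insert_of_notMem hbR]
  rw [Finset.card_filter, hcard, Nat.add_sub_cancel, ← Finset.card_powerset, hS,
    Finset.sum_powerset_insert haR, Finset.sum_powerset_insert hbR,
    Finset.sum_powerset_insert hbR, Finset.card_eq_sum_ones]
  have hnot : ∀ T ∈ R.powerset, a ∉ T ∧ b ∉ T := fun T hT =>
    ⟨fun h => haR (by simp [Finset.mem_powerset.mp hT h]),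
      fun h => hbR (Finset.mem_powerset.mp hT h)⟩
  rw [Finset.sum_congr rfl fun T hT => if_neg (by simp [(hnot T hT).1]),
    Finset.sum_congr rfl fun T _ => if_neg (by simp),
    Finset.sum_congr rfl fun T hT => if_pos (by simp [hab.symm, (hnot T hT).2]),
    Finset.sum_congr rfl fun T _ => if_neg (by simp)]
  simp

/-- Each pair of distinct points of `S` is cut from left to right by a quarter of the subsets
of `S`. -/
lemma sum_powerset_card_cut (R : Finset (V × V)) (hR : ∀ e ∈ R, e.1 ≠ e.2) (S : Finset V) :
    ∑ T ∈ S.powerset, (R.filter fun e => e.1 ∈ T ∧ e.2 ∈ S \ T).card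
      = 2 ^ (S.card - 2) * (R.filter fun e => e.1 ∈ S ∧ e.2 ∈ S).card := by
  simp only [Finset.card_filter]
  rw [Finset.sum_comm, Finset.mul_sum]
  refine Finset.sum_congr rfl fun e he => ?_
  by_cases hS : e.1 ∈ S ∧ e.2 ∈ S
  · rw [if_pos hS, mul_one, ← card_powerset_filter_mem_notMem hS.1 hS.2 (hR e he),
      Finset.card_filter]
    exact Finset.sum_congr rfl fun T _ => by simp [hS.2]
  · rw [if_neg hS, mul_zero]
    refine Finset.sum_eq_zero fun T hT => if_neg ?_
    rintro ⟨h1, h2⟩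
    exact hS ⟨Finset.mem_powerset.mp hT h1, (Finset.mem_sdiff.mp h2).1⟩

lemma sum_powerset_card_mul_card_sdiff (S : Finset V) :
    ∑ T ∈ S.powerset, (T.card : ℝ) * (S \ T).card
      = 2 ^ (S.card - 2) * ((S.card : ℝ) * ((S.card : ℝ) - 1)) := by
  have hprod : ∀ T ∈ S.powerset,
      (S.offDiag.filter fun e => e.1 ∈ T ∧ e.2 ∈ S \ T).card = T.card * (S \ T).card := by
    intro T hT
    rw [← Finset.card_product]
    congr 1
    ext e
    simp only [Finset.mem_filter, Finset.mem_offDiag, Finset.mem_product, Finset.mem_sdiff]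
    constructor
    · rintro ⟨-, h1, h2⟩
      exact ⟨h1, h2⟩
    · rintro ⟨h1, h2, h3⟩
      exact ⟨⟨Finset.mem_powerset.mp hT h1, h2, fun h => h3 (h ▸ h1)⟩, h1, h2, h3⟩
  have hdiag : (S.offDiag.filter fun e => e.1 ∈ S ∧ e.2 ∈ S).card = S.card * S.card - S.card := by
    rw [Finset.filter_true_of_mem fun e he => ⟨(Finset.mem_offDiag.mp he).1,
      (Finset.mem_offDiag.mp he).2.1⟩, Finset.offDiag_card]
  have hcut := sum_powerset_card_cut S.offDiag (fun e he => (Finset.mem_offDiag.mp he).2.2) S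
  rw [Finset.sum_congr rfl hprod, hdiag] at hcut
  have := congrArg (Nat.cast : ℕ → ℝ) hcut
  push_cast [Nat.cast_sub (Nat.le_mul_self S.card)] at this
  rw [this]
  ring

end Powerset

lemma tendsto_error_bound {g : ℕ → ℝ} (hg : Tendsto g atTop (nhds 0)) (C c K : ℝ) :
    Tendsto (fun n : ℕ => C * (c * (4 * g n + 1 / ((n : ℝ) - 1))) + K / n) atTop (nhds 0) := by
  have hinv : Tendsto (fun n : ℕ => 1 / ((n : ℝ) - 1)) atTop (nhds 0) := by
    simpa [Pi.inv_def, sub_eq_add_neg] using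
      (tendsto_atTop_add_const_right _ (-1) tendsto_natCast_atTop_atTop).inv_tendsto_atTop
  simpa using ((((hg.const_mul 4).add hinv).const_mul c).const_mul C).add
    (tendsto_const_div_atTop_nhds_zero_nat K)

lemma one_add_sum_mul_div_le_massOf {X : Type*} [Fintype X] {μ : X → ℝ} (hμ0 : ∀ x, 0 ≤ μ x)
    (hμ1 : ∑ x, μ x = 1) {f : X → ℝ} (hf : ∀ x, f x ≤ 0) {δ : ℝ} (hδ : 0 < δ) :
    1 + (∑ x, μ x * f x) / δ ≤ massOf μ (fun x => f x > -δ) := by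
  have hkey : ∑ x, μ x * f x ≤ (massOf μ (fun x => f x > -δ) - 1) * δ := by
    rw [massOf, ← hμ1, ← Finset.sum_sub_distrib, Finset.sum_mul]
    refine Finset.sum_le_sum fun x _ => ?_
    split_ifs with h
    · simpa using mul_nonpos_of_nonneg_of_nonpos (hμ0 x) (hf x)
    · nlinarith [hμ0 x, not_lt.mp h]
  rw [← le_sub_iff_add_le', div_le_iff₀ hδ]
  exact hkey

lemma massOf_le_one {X : Type*} [Fintype X] {μ : X → ℝ} (hμ0 : ∀ x, 0 ≤ μ x)
    (hμ1 : ∑ x, μ x = 1) (p : X → Prop) : massOf μ p ≤ 1 := by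
  rw [massOf, ← hμ1]
  exact Finset.sum_le_sum fun x _ => by split_ifs <;> simp [hμ0 x]

section Counting

variable {V A : Type*} [DecidableEq A] [Fintype A]

lemma sum_edges_eq_mul_sum_boundary (E : Finset (V × V)) (x : V → A) (F : A → A → ℝ)
    (hm : (E.card : ℝ) ≠ 0) :
    ∑ e ∈ E, F (x e.1) (x e.2) = (E.card : ℝ) * ∑ j, ∑ ℓ, boundary E x j ℓ * F j ℓ := by
  rw [← Finset.sum_fiberwise E (fun e => (x e.1, x e.2)), Fintype.sum_prod_type, Finset.mul_sum]
  refine Finset.sum_congr rfl fun j _ => ?_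
  rw [Finset.mul_sum]
  refine Finset.sum_congr rfl fun ℓ _ => ?_
  have hfiber : (E.filter fun e => (x e.1, x e.2) = (j, ℓ))
      = E.filter fun e => x e.1 = j ∧ x e.2 = ℓ := by
    simp only [Prod.ext_iff]
  rw [hfiber, Finset.sum_congr rfl fun e he => by
    rw [(Finset.mem_filter.mp he).2.1, (Finset.mem_filter.mp he).2.2], Finset.sum_const,
    nsmul_eq_mul, boundary]
  field_simp

lemma sum_boundary (E : Finset (V × V)) (x : V → A) (hm : (E.card : ℝ) ≠ 0) :
    ∑ j, ∑ ℓ, boundary E x j ℓ = 1 := by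
  have := sum_edges_eq_mul_sum_boundary E x (fun _ _ => (1 : ℝ)) hm
  simp only [mul_one, Finset.sum_const, nsmul_eq_mul] at this
  exact (mul_eq_left₀ hm).mp this.symm

variable [Fintype V]

lemma sum_comp_eq_mul_sum_confType (x : V → A) (F : A → ℝ) (hn : (Fintype.card V : ℝ) ≠ 0) :
    ∑ u, F (x u) = (Fintype.card V : ℝ) * ∑ j, confType x j * F j := by
  rw [← Finset.sum_fiberwise Finset.univ x, Finset.mul_sum]
  refine Finset.sum_congr rfl fun j _ => ?_
  rw [Finset.sum_congr rfl fun v hv => by rw [(Finset.mem_filter.mp hv).2], Finset.sum_const,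
    nsmul_eq_mul, confType]
  field_simp

lemma sum_confType (x : V → A) (hn : (Fintype.card V : ℝ) ≠ 0) : ∑ j, confType x j = 1 := by
  have := sum_comp_eq_mul_sum_confType x (fun _ => (1 : ℝ)) hn
  simp only [mul_one, Finset.sum_const, Finset.card_univ, nsmul_eq_mul] at this
  exact (mul_eq_left₀ hn).mp this.symm

lemma confType_mem_stdSimplex (x : V → A) (hn : (Fintype.card V : ℝ) ≠ 0) :
    confType x ∈ stdSimplex ℝ A :=
  ⟨fun _ => by unfold confType; positivity, sum_confType x hn⟩

end Counting

namespace PinModel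

variable {V A : Type*} [Fintype V] [DecidableEq V]
  (E : Finset (V × V)) (ρ : ℝ) (P : A → A → ℝ) (φ : A → A → A → ℝ)

def rate (x : V → A) (u : V) (a : A) : ℝ :=
  (1 - ρ) * (1 / (Fintype.card V : ℝ)) * P (x u) a
    + (ρ / (E.card : ℝ)) * ∑ e ∈ E.filter fun e => e.1 = u, φ (x u) a (x e.2)

lemma rate_nonneg (hρ0 : 0 ≤ ρ) (hρ1 : ρ ≤ 1) (hP : ∀ i j, 0 ≤ P i j)
    (hφ : ∀ i j ℓ, 0 ≤ φ i j ℓ) (x : V → A) (u : V) (a : A) : 0 ≤ rate E ρ P φ x u a := by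
  have h1 : 0 ≤ 1 - ρ := sub_nonneg.mpr hρ1
  have h2 := Finset.sum_nonneg fun e (_ : e ∈ E.filter fun e => e.1 = u) => hφ (x u) a (x e.2)
  have h3 := hP (x u) a
  unfold rate
  positivity

variable [DecidableEq A]

lemma Toff_update (x : V → A) {u : V} {a : A} (h : a ≠ x u) :
    Toff E ρ P φ x (Function.update x u a) = rate E ρ P φ x u a := by
  have hdiff : (Finset.univ.filter fun v => x v ≠ Function.update x u a v) = {u} := by
    ext v
    rcases eq_or_ne v u with rfl | hv
    · simp [Ne.symm h]
    · simp [hv]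
  simp [Toff, hdiff, rate]

lemma confType_update_sub (x : V → A) (u : V) (a i : A) :
    confType (Function.update x u a) i - confType x i
      = ((if a = i then 1 else 0) - (if x u = i then 1 else 0)) / (Fintype.card V : ℝ) := by
  have hcount : ∀ z : V → A,
      confType z i = (∑ v, if z v = i then (1 : ℝ) else 0) / Fintype.card V := by
    intro z
    simp [confType, Finset.sum_boole]
  rw [hcount, hcount, ← sub_div, ← Finset.sum_sub_distrib, Finset.sum_eq_single u]
  · simp
  · intro v _ hv
    simp [Function.update_of_ne hv]
  · simp

variable [Fintype A]

lemma sum_pinTrans_mul_sub (x : V → A) (f : (V → A) → ℝ) :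
    ∑ y, pinTrans E ρ P φ x y * (f y - f x)
      = ∑ u, ∑ a, rate E ρ P φ x u a * (f (Function.update x u a) - f x) := by
  have hoff : ∀ y, pinTrans E ρ P φ x y * (f y - f x) = Toff E ρ P φ x y * (f y - f x) := by
    intro y
    rcases eq_or_ne x y with rfl | hxy
    · simp
    · simp [pinTrans, hxy]
  rw [Finset.sum_congr rfl fun y _ => hoff y, ← Fintype.sum_prod_type']
  symm
  -- nonzero terms on the right are moves `(u, a)` with `a ≠ x u`; these correspond to the
  -- configurations that differ from `x` at exactly one node, the only ones `Toff` charges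
  refine Finset.sum_bij_ne_zero (fun p _ _ => Function.update x p.1 p.2) (by simp)
    ?inj ?surj ?val
  case inj =>
    rintro ⟨u, a⟩ - hp ⟨u', a'⟩ - -
    have ha : a ≠ x u := by rintro rfl; simp at hp
    simpa [Prod.ext_iff] using eq_and_eq_of_update_eq_update ha
  case surj =>
    intro y _ hy
    obtain ⟨u, hu⟩ : ∃ u, (Finset.univ.filter fun v => x v ≠ y v) = {u} := by
      by_contra hne
      exact left_ne_zero_of_mul hy (by simp [Toff, Finset.card_eq_one.not.mpr hne])
    have hy' := eq_update_of_forall_ne_iff (x := x) (y := y) fun v => by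
      simpa using Finset.ext_iff.mp hu v
    have hyu : y u ≠ x u := by simpa [eq_comm] using Finset.ext_iff.mp hu u
    refine ⟨(u, y u), Finset.mem_univ _, ?_, hy'.symm⟩
    rwa [← Toff_update E ρ P φ x hyu, ← hy']
  case val =>
    rintro ⟨u, a⟩ - hp
    have ha : a ≠ x u := by rintro rfl; simp at hp
    simp only [Toff_update E ρ P φ x ha]

lemma sum_pinTrans (x : V → A) : ∑ y, pinTrans E ρ P φ x y = 1 := by
  rw [← Finset.add_sum_erase _ _ (Finset.mem_univ x), Finset.sum_congr rfl fun y hy => by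
    rw [pinTrans, if_neg (Finset.ne_of_mem_erase hy).symm],
    Finset.sum_erase _ (by simp [Toff]), pinTrans, if_pos rfl, sub_add_cancel]

lemma sum_rate_mul (x : V → A) (h : A → A → ℝ)
    (hn : (Fintype.card V : ℝ) ≠ 0) (hm : (E.card : ℝ) ≠ 0) :
    ∑ u, ∑ a, rate E ρ P φ x u a * h (x u) a
      = (1 - ρ) * ∑ j, confType x j * ∑ a, P j a * h j a
        + ρ * ∑ j, ∑ ℓ, boundary E x j ℓ * ∑ a, φ j a ℓ * h j a := by
  have hnodes := sum_comp_eq_mul_sum_confType x (fun j => ∑ a, P j a * h j a) hn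
  have hedges := sum_edges_eq_mul_sum_boundary E x (fun j ℓ => ∑ a, φ j a ℓ * h j a) hm
  have hfibers : ∑ u, ∑ a, (∑ e ∈ E.filter (fun e => e.1 = u), φ (x u) a (x e.2)) * h (x u) a
      = ∑ e ∈ E, ∑ a, φ (x e.1) a (x e.2) * h (x e.1) a := by
    rw [← Finset.sum_fiberwise E Prod.fst]
    refine Finset.sum_congr rfl fun u _ => ?_
    simp only [Finset.sum_mul]
    rw [Finset.sum_comm]
    refine Finset.sum_congr rfl fun e he => ?_
    rw [(Finset.mem_filter.mp he).2]
  have hsplit : ∑ u, ∑ a, rate E ρ P φ x u a * h (x u) a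
      = (1 - ρ) / (Fintype.card V : ℝ) * ∑ u, ∑ a, P (x u) a * h (x u) a
        + ρ / (E.card : ℝ) * ∑ u, ∑ a,
          (∑ e ∈ E.filter (fun e => e.1 = u), φ (x u) a (x e.2)) * h (x u) a := by
    rw [Finset.mul_sum, Finset.mul_sum, ← Finset.sum_add_distrib]
    refine Finset.sum_congr rfl fun u _ => ?_
    rw [Finset.mul_sum, Finset.mul_sum, ← Finset.sum_add_distrib]
    refine Finset.sum_congr rfl fun a _ => ?_
    rw [rate]
    ring
  rw [hsplit, hfibers, hnodes, hedges]
  field_simp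

lemma sum_rate (hP : ∀ i, ∑ j, P i j = 1) (hφ : ∀ i ℓ, ∑ j, φ i j ℓ = 1)
    (hn : (Fintype.card V : ℝ) ≠ 0) (hm : (E.card : ℝ) ≠ 0) (x : V → A) :
    ∑ u, ∑ a, rate E ρ P φ x u a = 1 := by
  have := sum_rate_mul E ρ P φ x (fun _ _ => 1) hn hm
  simp only [mul_one, hP, hφ, sum_confType x hn, sum_boundary E x hm] at this
  linarith

lemma norm_confType_update_sub_le (x : V → A) (u : V) (a : A) :
    ‖confType (Function.update x u a) - confType x‖ ≤ 1 / (Fintype.card V : ℝ) := by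
  refine (pi_norm_le_iff_of_nonneg (by positivity)).mpr fun i => ?_
  rw [Pi.sub_apply, confType_update_sub, Real.norm_eq_abs, abs_div, Nat.abs_cast]
  gcongr
  split_ifs <;> norm_num

lemma meanDrift_eq (hP : ∀ i, ∑ j, P i j = 1) (hφ : ∀ i ℓ, ∑ j, φ i j ℓ = 1)
    (hn : (Fintype.card V : ℝ) ≠ 0) (hm : (E.card : ℝ) ≠ 0) (x : V → A) (i : A) :
    meanDrift E ρ P φ x i
      = (1 - ρ) * (∑ j, P j i * confType x j - confType x i)
        + ρ * Qop φ (boundary E x) i := by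
  have hrow : ∀ (K : A → ℝ), (∑ a, K a = 1) → ∀ j, ∑ a, K a * ((if a = i then 1 else 0)
      - (if j = i then 1 else 0)) = K i - if j = i then 1 else 0 := by
    intro K hK j
    rw [Finset.sum_congr rfl fun a _ => mul_sub _ _ _, Finset.sum_sub_distrib, ← Finset.sum_mul,
      hK, one_mul]
    simp
  rw [meanDrift, sum_pinTrans_mul_sub]
  simp only [confType_update_sub, ← mul_div_assoc, ← Finset.sum_div, mul_div_cancel₀ _ hn]
  rw [sum_rate_mul E ρ P φ x (fun j a => (if a = i then 1 else 0) - (if j = i then 1 else 0))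
    hn hm]
  simp only [hrow _ (hP _), hrow _ (hφ _ _)]
  simp only [Qop, mul_sub, Finset.sum_sub_distrib, mul_ite, mul_one, mul_zero,
    Finset.sum_ite_irrel, Finset.sum_const_zero, Finset.sum_ite_eq', Finset.mem_univ, if_true]
  rw [Finset.sum_comm (f := fun j ℓ => boundary E x j ℓ * φ j i ℓ)]
  simp only [mul_comm (P _ i)]

end PinModel

lemma IsPinStationary.sum_mul_generator_eq_zero {V A : Type*} [Fintype V] [DecidableEq V]
    [Fintype A] [DecidableEq A] {E : Finset (V × V)} {ρ : ℝ} {P : A → A → ℝ}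
    {φ : A → A → A → ℝ} {μ : (V → A) → ℝ} (hμ : IsPinStationary E ρ P φ μ)
    (f : (V → A) → ℝ) : ∑ x, μ x * ∑ y, pinTrans E ρ P φ x y * (f y - f x) = 0 := by
  simp only [mul_sub, Finset.sum_sub_distrib, Finset.mul_sum, ← mul_assoc]
  rw [Finset.sum_comm]
  simp only [← Finset.sum_mul, hμ.2.2, ← Finset.mul_sum, PinModel.sum_pinTrans, mul_one, sub_self]

section Drift

variable {A : Type*} [Fintype A] (ρ : ℝ) (P : A → A → ℝ) (φ : A → A → A → ℝ)

lemma limitDrift_eq {θ : A → ℝ} (hθ : ∑ j, θ j = 1) (i : A) :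
    limitDrift ρ P φ θ i
      = (1 - ρ) * (∑ j, P j i * θ j - θ i) + ρ * Qop φ (fun j ℓ => θ j * θ ℓ) i := by
  have hdiag : ∑ ℓ, θ i * θ ℓ = θ i := by rw [← Finset.mul_sum, hθ, mul_one]
  have hpair : ∀ ℓ, θ ℓ * ∑ j, φ j i ℓ * θ j = ∑ j, θ j * θ ℓ * φ j i ℓ := fun ℓ => by
    rw [Finset.mul_sum]
    exact Finset.sum_congr rfl fun j _ => by ring
  simp only [limitDrift, Qop, hdiag, hpair]
  ring

lemma Qop_sub (ξ ζ : A → A → ℝ) (i : A) : Qop φ ξ i - Qop φ ζ i = Qop φ (ξ - ζ) i := by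
  simp only [Qop, Pi.sub_apply, sub_mul, Finset.sum_sub_distrib]
  ring

lemma abs_Qop_le (hφ0 : ∀ i j ℓ, 0 ≤ φ i j ℓ) (hφ1 : ∀ i ℓ, ∑ j, φ i j ℓ = 1)
    {ζ : A → A → ℝ} {c : ℝ} (hζ : ∀ j ℓ, |ζ j ℓ| ≤ c) (i : A) :
    |Qop φ ζ i| ≤ (Fintype.card A ^ 2 + Fintype.card A) * c := by
  have hφle : ∀ j ℓ, φ j i ℓ ≤ 1 := fun j ℓ =>
    (Finset.single_le_sum (fun a _ => hφ0 j a ℓ) (Finset.mem_univ i)).trans_eq (hφ1 j ℓ)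
  have hin : |∑ ℓ, ∑ j, ζ j ℓ * φ j i ℓ| ≤ Fintype.card A ^ 2 * c := by
    calc |∑ ℓ, ∑ j, ζ j ℓ * φ j i ℓ| ≤ ∑ ℓ : A, ∑ j : A, c := by
          refine (Finset.abs_sum_le_sum_abs _ _).trans (Finset.sum_le_sum fun ℓ _ => ?_)
          refine (Finset.abs_sum_le_sum_abs _ _).trans (Finset.sum_le_sum fun j _ => ?_)
          rw [abs_mul, abs_of_nonneg (hφ0 j i ℓ)]
          exact (mul_le_of_le_one_right (abs_nonneg _) (hφle j ℓ)).trans (hζ j ℓ)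
      _ = Fintype.card A ^ 2 * c := by simp [sq, mul_assoc]
  have hout : |∑ ℓ, ζ i ℓ| ≤ Fintype.card A * c := by
    calc |∑ ℓ, ζ i ℓ| ≤ ∑ ℓ : A, c :=
          (Finset.abs_sum_le_sum_abs _ _).trans (Finset.sum_le_sum fun ℓ _ => hζ i ℓ)
      _ = Fintype.card A * c := by simp
  calc |Qop φ ζ i| ≤ |∑ ℓ, ∑ j, ζ j ℓ * φ j i ℓ| + |∑ ℓ, ζ i ℓ| := abs_sub _ _
    _ ≤ _ := by linarith

end Drift

section MixingGap

variable {V : Type*} [DecidableEq V] [Fintype V] (E : Finset (V × V))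

lemma le_mixingGap {S U : Finset V} (h : Disjoint S U) :
    |((E.filter fun e => e.1 ∈ S ∧ e.2 ∈ U).card : ℝ) / (E.card : ℝ) -
      ((S.card : ℝ) * (U.card : ℝ)) / ((Fintype.card V : ℝ) * ((Fintype.card V : ℝ) - 1))|
      ≤ mixingGap E := by
  refine le_csSup ((Set.finite_range fun p : Finset V × Finset V =>
    |((E.filter fun e => e.1 ∈ p.1 ∧ e.2 ∈ p.2).card : ℝ) / (E.card : ℝ) -
      ((p.1.card : ℝ) * (p.2.card : ℝ)) /
        ((Fintype.card V : ℝ) * ((Fintype.card V : ℝ) - 1))|).bddAbove.mono ?_) ⟨S, U, h, rfl⟩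
  rintro w ⟨S', U', -, rfl⟩
  exact ⟨(S', U'), rfl⟩

lemma mixingGap_nonneg : 0 ≤ mixingGap E :=
  (abs_nonneg _).trans (le_mixingGap E (Finset.disjoint_empty_left ∅))

lemma abs_card_filter_mem_mem_sub_le (hE : ∀ e ∈ E, e.1 ≠ e.2) (S : Finset V) :
    |((E.filter fun e => e.1 ∈ S ∧ e.2 ∈ S).card : ℝ) / (E.card : ℝ) -
      ((S.card : ℝ) * ((S.card : ℝ) - 1)) / ((Fintype.card V : ℝ) * ((Fintype.card V : ℝ) - 1))|
      ≤ 4 * mixingGap E := by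
  set N := (Fintype.card V : ℝ) * ((Fintype.card V : ℝ) - 1)
  set c : ℝ := 2 ^ (S.card - 2)
  have hc : 0 < c := by positivity
  have hcut := congrArg (Nat.cast : ℕ → ℝ) (sum_powerset_card_cut E hE S)
  push_cast at hcut
  have havg : ∑ T ∈ S.powerset,
      (((E.filter fun e => e.1 ∈ T ∧ e.2 ∈ S \ T).card : ℝ) / (E.card : ℝ)
        - ((T.card : ℝ) * ((S \ T).card : ℝ)) / N)
      = c * (((E.filter fun e => e.1 ∈ S ∧ e.2 ∈ S).card : ℝ) / (E.card : ℝ)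
        - ((S.card : ℝ) * ((S.card : ℝ) - 1)) / N) := by
    rw [Finset.sum_sub_distrib, ← Finset.sum_div, ← Finset.sum_div, hcut,
      sum_powerset_card_mul_card_sdiff]
    ring
  have hbound := (Finset.abs_sum_le_sum_abs _ S.powerset).trans
    (Finset.sum_le_sum fun T _ => le_mixingGap E (Finset.disjoint_sdiff (s := T) (t := S)))
  rw [havg, abs_mul, abs_of_pos hc, Finset.sum_const, Finset.card_powerset, nsmul_eq_mul] at hbound
  have hpow : ((2 ^ S.card : ℕ) : ℝ) ≤ 4 * c := by
    calc ((2 ^ S.card : ℕ) : ℝ) ≤ 2 ^ (S.card - 2 + 2) := by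
          push_cast
          exact pow_le_pow_right₀ one_le_two (by omega)
      _ = 4 * c := by rw [pow_add]; ring
  refine le_of_mul_le_mul_left ?_ hc
  calc c * _ ≤ _ := hbound
    _ ≤ 4 * c * mixingGap E := mul_le_mul_of_nonneg_right hpow (mixingGap_nonneg E)
    _ = c * (4 * mixingGap E) := by ring

end MixingGap

lemma abs_boundary_sub_confType_mul_le {V A : Type*} [Fintype V] [DecidableEq V] [DecidableEq A]
    (E : Finset (V × V)) (hE : ∀ e ∈ E, e.1 ≠ e.2) (hn : (2 : ℝ) ≤ Fintype.card V)
    (x : V → A) (i j : A) :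
    |boundary E x i j - confType x i * confType x j|
      ≤ 4 * mixingGap E + 1 / ((Fintype.card V : ℝ) - 1) := by
  set S := Finset.univ.filter fun v => x v = i
  set U := Finset.univ.filter fun v => x v = j
  have hcard : ∀ T : Finset V, (0 : ℝ) ≤ T.card ∧ (T.card : ℝ) ≤ Fintype.card V :=
    fun T => ⟨Nat.cast_nonneg _, by exact_mod_cast Finset.card_le_univ T⟩
  have hξ : boundary E x i j
      = ((E.filter fun e => e.1 ∈ S ∧ e.2 ∈ U).card : ℝ) / (E.card : ℝ) := by
    simp [boundary, S, U]
  have hW := mixingGap_nonneg E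
  rw [hξ, confType, confType]
  rcases eq_or_ne i j with rfl | hij
  · refine (abs_sub_le _ _ _).trans (add_le_add (abs_card_filter_mem_mem_sub_le E hE S) ?_)
    exact abs_mul_sub_one_div_mul_sub_one_sub_le hn (hcard S).1 (hcard S).2
  · have hSU : Disjoint S U := Finset.disjoint_filter.mpr fun v _ hi hj => hij (hi ▸ hj)
    refine (abs_sub_le _ _ _).trans (add_le_add ((le_mixingGap E hSU).trans ?_) ?_)
    · linarith
    · exact abs_mul_div_mul_sub_one_sub_le hn (hcard S).1 (hcard S).2 (hcard U).1 (hcard U).2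

lemma norm_meanDrift_sub_limitDrift_le {V A : Type*} [Fintype V] [DecidableEq V] [Fintype A]
    [DecidableEq A] {E : Finset (V × V)} {ρ : ℝ} {P : A → A → ℝ} {φ : A → A → A → ℝ}
    (hmodel : IsPinModel E ρ P φ) (hn : (2 : ℝ) ≤ Fintype.card V) (x : V → A) :
    ‖meanDrift E ρ P φ x - limitDrift ρ P φ (confType x)‖
      ≤ (Fintype.card A ^ 2 + Fintype.card A)
        * (4 * mixingGap E + 1 / ((Fintype.card V : ℝ) - 1)) := by
  obtain ⟨hρ0, hρ1, -, hP, hφ0, hφ1, hE, hloop⟩ := hmodel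
  have hn0 : (Fintype.card V : ℝ) ≠ 0 := by positivity
  have hm : (E.card : ℝ) ≠ 0 := by exact_mod_cast hE.card_pos.ne'
  have hn1 : (0 : ℝ) < Fintype.card V - 1 := by linarith
  have hW := mixingGap_nonneg E
  refine (pi_norm_le_iff_of_nonneg (by positivity)).mpr fun i => ?_
  rw [Pi.sub_apply, PinModel.meanDrift_eq E ρ P φ hP hφ1 hn0 hm,
    limitDrift_eq ρ P φ (sum_confType x hn0), Real.norm_eq_abs]
  have hdiff : ∀ a c d : ℝ, (a + ρ * c) - (a + ρ * d) = ρ * (c - d) := fun _ _ _ => by ring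
  rw [hdiff, Qop_sub, abs_mul, abs_of_nonneg hρ0]
  exact (mul_le_of_le_one_left (abs_nonneg _) hρ1).trans (abs_Qop_le φ hφ0 hφ1
    (fun j ℓ => abs_boundary_sub_confType_mul_le E hloop hn x j ℓ) i)

section Pointwise

open scoped NNReal

variable {V A : Type*} [Fintype V] [DecidableEq V] [Fintype A] [DecidableEq A]
  {E : Finset (V × V)} {ρ : ℝ} {P : A → A → ℝ} {φ : A → A → A → ℝ}
  {W : (A → ℝ) → ℝ} {K : ℝ≥0}

lemma abs_sub_sub_fderiv_confType_update_le (hn : (Fintype.card V : ℝ) ≠ 0)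
    (hW : ∀ θ ∈ stdSimplex ℝ A, DifferentiableAt ℝ W θ)
    (hK : LipschitzOnWith K (fderiv ℝ W) (stdSimplex ℝ A)) (x : V → A) (u : V) (a : A) :
    |W (confType (Function.update x u a)) - W (confType x)
        - fderiv ℝ W (confType x) (confType (Function.update x u a) - confType x)|
      ≤ K / (Fintype.card V : ℝ) ^ 2 := by
  calc _ ≤ K * ‖confType (Function.update x u a) - confType x‖ ^ 2 := by
        rw [← Real.norm_eq_abs]
        exact norm_sub_sub_fderiv_le_of_lipschitzOnWith hW (convex_stdSimplex ℝ A) hK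
          (confType_mem_stdSimplex x hn) (confType_mem_stdSimplex (Function.update x u a) hn)
    _ ≤ K * (1 / (Fintype.card V : ℝ)) ^ 2 := by
        gcongr
        exact PinModel.norm_confType_update_sub_le x u a
    _ = K / (Fintype.card V : ℝ) ^ 2 := by ring

lemma map_meanDrift_div_card (L : (A → ℝ) →L[ℝ] ℝ) (hn : (Fintype.card V : ℝ) ≠ 0)
    (x : V → A) :
    L (meanDrift E ρ P φ x) / Fintype.card V
      = ∑ y, pinTrans E ρ P φ x y * (L (confType y) - L (confType x)) := by
  have hmean : meanDrift E ρ P φ x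
      = (Fintype.card V : ℝ) • ∑ y, pinTrans E ρ P φ x y • (confType y - confType x) := by
    ext i
    simp [meanDrift, Finset.sum_apply]
  simp only [hmean, map_smul, map_sum, map_sub, smul_eq_mul]
  field_simp

lemma abs_generator_sub_fderiv_meanDrift_le (hmodel : IsPinModel E ρ P φ)
    (hn : (Fintype.card V : ℝ) ≠ 0) (hW : ∀ θ ∈ stdSimplex ℝ A, DifferentiableAt ℝ W θ)
    (hK : LipschitzOnWith K (fderiv ℝ W) (stdSimplex ℝ A)) (x : V → A) :
    |∑ y, pinTrans E ρ P φ x y * (W (confType y) - W (confType x))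
        - fderiv ℝ W (confType x) (meanDrift E ρ P φ x) / Fintype.card V|
      ≤ K / (Fintype.card V : ℝ) ^ 2 := by
  obtain ⟨hρ0, hρ1, hP0, hP1, hφ0, hφ1, hE, -⟩ := hmodel
  have hm : (E.card : ℝ) ≠ 0 := by exact_mod_cast hE.card_pos.ne'
  set g : (V → A) → ℝ := fun y => W (confType y) - fderiv ℝ W (confType x) (confType y)
  have hsum : ∑ y, pinTrans E ρ P φ x y * (W (confType y) - W (confType x))
      - fderiv ℝ W (confType x) (meanDrift E ρ P φ x) / Fintype.card V
      = ∑ u, ∑ a, PinModel.rate E ρ P φ x u a * (g (Function.update x u a) - g x) := by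
    rw [map_meanDrift_div_card _ hn, ← Finset.sum_sub_distrib, ← PinModel.sum_pinTrans_mul_sub]
    exact Finset.sum_congr rfl fun y _ => by simp only [g]; ring
  rw [hsum, ← mul_one (K / _ : ℝ), ← PinModel.sum_rate E ρ P φ hP1 hφ1 hn hm x, Finset.mul_sum]
  refine (Finset.abs_sum_le_sum_abs _ _).trans (Finset.sum_le_sum fun u _ => ?_)
  rw [Finset.mul_sum]
  refine (Finset.abs_sum_le_sum_abs _ _).trans (Finset.sum_le_sum fun a _ => ?_)
  have hr := PinModel.rate_nonneg E ρ P φ hρ0 hρ1 hP0 hφ0 x u a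
  have htaylor := abs_sub_sub_fderiv_confType_update_le hn hW hK x u a
  rw [map_sub] at htaylor
  rw [abs_mul, abs_of_nonneg hr, mul_comm (K / _ : ℝ)]
  refine mul_le_mul_of_nonneg_left (le_of_eq_of_le ?_ htaylor) hr
  simp only [g]
  ring_nf

lemma abs_card_mul_generator_sub_fderiv_limitDrift_le (hmodel : IsPinModel E ρ P φ)
    (hn : (2 : ℝ) ≤ Fintype.card V) (hW : ∀ θ ∈ stdSimplex ℝ A, DifferentiableAt ℝ W θ)
    (hK : LipschitzOnWith K (fderiv ℝ W) (stdSimplex ℝ A)) {C : ℝ}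
    (hC : ∀ θ ∈ stdSimplex ℝ A, ‖fderiv ℝ W θ‖ ≤ C) (x : V → A) :
    |Fintype.card V * ∑ y, pinTrans E ρ P φ x y * (W (confType y) - W (confType x))
        - fderiv ℝ W (confType x) (limitDrift ρ P φ (confType x))|
      ≤ C * ((Fintype.card A ^ 2 + Fintype.card A)
          * (4 * mixingGap E + 1 / ((Fintype.card V : ℝ) - 1))) + K / Fintype.card V := by
  have hn0 : (0 : ℝ) < Fintype.card V := by linarith
  have hθ := confType_mem_stdSimplex x hn0.ne'
  set L := fderiv ℝ W (confType x)
  have hstep : |Fintype.card V * ∑ y, pinTrans E ρ P φ x y * (W (confType y) - W (confType x))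
      - L (meanDrift E ρ P φ x)| ≤ K / Fintype.card V := by
    have h := abs_generator_sub_fderiv_meanDrift_le hmodel hn0.ne' hW hK x
    rw [← mul_le_mul_iff_of_pos_left hn0, ← abs_of_pos hn0, ← abs_mul, abs_of_pos hn0,
      mul_sub, mul_div_cancel₀ _ hn0.ne'] at h
    exact h.trans_eq (by field_simp)
  have hdrift : |L (meanDrift E ρ P φ x) - L (limitDrift ρ P φ (confType x))|
      ≤ C * ((Fintype.card A ^ 2 + Fintype.card A)
          * (4 * mixingGap E + 1 / ((Fintype.card V : ℝ) - 1))) := by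
    rw [← map_sub, ← Real.norm_eq_abs]
    exact (L.le_opNorm _).trans (mul_le_mul (hC _ hθ) (norm_meanDrift_sub_limitDrift_le hmodel hn x)
      (norm_nonneg _) ((norm_nonneg _).trans (hC _ hθ)))
  linarith [abs_sub_le (Fintype.card V * ∑ y, pinTrans E ρ P φ x y
    * (W (confType y) - W (confType x))) (L (meanDrift E ρ P φ x))
    (L (limitDrift ρ P φ (confType x)))]

lemma sum_mul_fderiv_limitDrift_ge (hmodel : IsPinModel E ρ P φ)
    (hn : (2 : ℝ) ≤ Fintype.card V) (hW : ∀ θ ∈ stdSimplex ℝ A, DifferentiableAt ℝ W θ)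
    (hK : LipschitzOnWith K (fderiv ℝ W) (stdSimplex ℝ A)) {C : ℝ}
    (hC : ∀ θ ∈ stdSimplex ℝ A, ‖fderiv ℝ W θ‖ ≤ C) {μ : (V → A) → ℝ}
    (hμ : IsPinStationary E ρ P φ μ) :
    -(C * ((Fintype.card A ^ 2 + Fintype.card A)
          * (4 * mixingGap E + 1 / ((Fintype.card V : ℝ) - 1))) + K / Fintype.card V)
      ≤ ∑ x, μ x * fderiv ℝ W (confType x) (limitDrift ρ P φ (confType x)) := by
  set b := C * ((Fintype.card A ^ 2 + Fintype.card A)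
    * (4 * mixingGap E + 1 / ((Fintype.card V : ℝ) - 1))) + K / Fintype.card V
  set G := fun x => ∑ y, pinTrans E ρ P φ x y * (W (confType y) - W (confType x))
  set H := fun x : V → A => fderiv ℝ W (confType x) (limitDrift ρ P φ (confType x))
  have hG : ∑ x, μ x * G x = 0 := hμ.sum_mul_generator_eq_zero fun y => W (confType y)
  calc -b = ∑ x, μ x * -b := by rw [← Finset.sum_mul, hμ.2.1, one_mul]
    _ ≤ ∑ x, μ x * (H x - Fintype.card V * G x) := by
        refine Finset.sum_le_sum fun x _ => mul_le_mul_of_nonneg_left ?_ (hμ.1 x)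
        have : |Fintype.card V * G x - H x| ≤ b :=
          abs_card_mul_generator_sub_fderiv_limitDrift_le hmodel hn hW hK hC x
        linarith [le_abs_self (Fintype.card V * G x - H x)]
    _ = ∑ x, μ x * H x := by
        simp only [mul_sub, Finset.sum_sub_distrib, mul_left_comm _ (Fintype.card V : ℝ),
          ← Finset.mul_sum, hG, mul_zero, sub_zero]

end Pointwise


theorem concentration_ATM_general {A : Type*} [Fintype A] [DecidableEq A]
    (ρ : ℝ) (P : A → A → ℝ) (φ : A → A → A → ℝ)
    (E : (n : ℕ) → Finset (Fin n × Fin n))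
    (hmodel : ∀ n, 2 ≤ n → IsPinModel (E n) ρ P φ)
    (hATM : Tendsto (fun n => mixingGap (E n)) atTop (nhds 0))
    (μ : (n : ℕ) → (Fin n → A) → ℝ)
    (hμ : ∀ n, 2 ≤ n → IsPinStationary (E n) ρ P φ (μ n))
    (W : (A → ℝ) → ℝ) (hW : ContDiff ℝ 2 W)
    (hLyap : ∀ θ : A → ℝ, inSimplex θ → fderiv ℝ W θ (limitDrift ρ P φ θ) ≤ 0) :
    ∀ δ > (0 : ℝ),
      Tendsto (fun n => massOf (μ n) (fun x : Fin n → A =>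
          fderiv ℝ W (confType x) (limitDrift ρ P φ (confType x)) > -δ))
        atTop (nhds 1) := by
  intro δ hδ
  obtain ⟨C, hC⟩ := (isCompact_stdSimplex ℝ A).exists_bound_of_continuousOn
    (hW.continuous_fderiv two_ne_zero).continuousOn
  obtain ⟨K, hK⟩ := (hW.fderiv_right (m := 1) le_rfl).contDiffOn.exists_lipschitzOnWith
    one_ne_zero (convex_stdSimplex ℝ A) (isCompact_stdSimplex ℝ A)
  set B : ℕ → ℝ := fun n => C * ((Fintype.card A ^ 2 + Fintype.card A)
    * (4 * mixingGap (E n) + 1 / ((n : ℝ) - 1))) + K / n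
  have hB : Tendsto B atTop (nhds 0) := tendsto_error_bound hATM _ _ _
  refine tendsto_of_tendsto_of_tendsto_of_le_of_le' (g := fun n => 1 + -B n / δ)
    (by simpa using (hB.neg.div_const δ).const_add 1) tendsto_const_nhds ?_ ?_
  · filter_upwards [eventually_ge_atTop 2] with n hn
    have hn' : (2 : ℝ) ≤ Fintype.card (Fin n) := by rw [Fintype.card_fin]; exact_mod_cast hn
    have hn0 : (Fintype.card (Fin n) : ℝ) ≠ 0 := by positivity
    have hlow := sum_mul_fderiv_limitDrift_ge (hmodel n hn) hn'
      (fun θ _ => (hW.differentiable two_ne_zero).differentiableAt) hK hC (hμ n hn)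
    rw [Fintype.card_fin] at hlow
    refine le_trans ?_ (one_add_sum_mul_div_le_massOf (hμ n hn).1 (hμ n hn).2.1
      (fun x => hLyap _ (confType_mem_stdSimplex x hn0)) hδ)
    gcongr
  · filter_upwards [eventually_ge_atTop 2] with n hn
    exact massOf_le_one (hμ n hn).1 (hμ n hn).2.1 _

/-- Theorem: concentration on asymptotically totally mixing networks.
If a PIN model with fixed parameters runs on an ATM sequence of graphs `G_n` and admits
a `C²` mean-field Lyapunov function `V`, then for every `δ > 0` the stationary
distributions satisfy `μ_n({x : ∇V(θ(x))·D̄(θ(x)) > −δ}) → 1` as `n → ∞`. -/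
theorem concentration_ATM {A : Type*} [Fintype A] [DecidableEq A] [Nonempty A]
    (ρ : ℝ) (P : A → A → ℝ) (φ : A → A → A → ℝ)
    (E : (n : ℕ) → Finset (Fin n × Fin n))
    (hmodel : ∀ n, 2 ≤ n → IsPinModel (E n) ρ P φ)
    (hATM : Tendsto (fun n => mixingGap (E n)) atTop (nhds 0))
    (μ : (n : ℕ) → (Fin n → A) → ℝ)
    (hμ : ∀ n, 2 ≤ n → IsPinStationary (E n) ρ P φ (μ n))
    (W : (A → ℝ) → ℝ) (hW : ContDiff ℝ 2 W)
    (hLyap : ∀ θ : A → ℝ, inSimplex θ → fderiv ℝ W θ (limitDrift ρ P φ θ) ≤ 0) :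
    ∀ δ > (0 : ℝ),
      Tendsto (fun n => massOf (μ n) (fun x : Fin n → A =>
          fderiv ℝ W (confType x) (limitDrift ρ P φ (confType x)) > -δ))
        atTop (nhds 1) :=
  concentration_ATM_general ρ P φ E hmodel hATM μ hμ W hW hLyap
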